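/- Let p ≥ 1 and d ≥ 2. For probability measures G_1, G_2 on ℝ^d supported in a common compact set of diameter R, there is a constant C_{p,R} depending only on p and R such that |SW_p^p(G_1, G) − SW_p^p(G_2, Ĝ)| ≤ C_{p,R} · (SW_1(G_1, G_2) + SW_1(G, Ĝ)) for any probability measures G, Ĝ supported in the same compact set. -/

import Mathlib

open MeasureTheory Set

/-- The p-th power of the p-Wasserstein distance, defined as the infimum of transport
costs over all couplings. -/
noncomputable def WpPow {E : Type*} [NormedAddCommGroup E] [MeasurableSpace E]
    (p : ℝ) (μ ν : Measure E) : ℝ :=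
  sInf {c : ℝ | ∃ γ : Measure (E × E),
    γ.map Prod.fst = μ ∧ γ.map Prod.snd = ν ∧ c = ∫ z, ‖z.1 - z.2‖ ^ p ∂γ}

/-- The quantile function (generalized inverse CDF) of a measure on ℝ. -/
noncomputable def quantileFn (μ : Measure ℝ) (t : ℝ) : ℝ :=
  sInf {x : ℝ | t ≤ (μ (Iic x)).toReal}

/-- The uniform (normalized surface) probability measure on the unit sphere of ℝ^d. -/
noncomputable def uniformSphere (d : ℕ) :
    Measure (Metric.sphere (0 : EuclideanSpace ℝ (Fin d)) 1) :=
  (((volume : Measure (EuclideanSpace ℝ (Fin d))).toSphere Set.univ)⁻¹) •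
    (volume : Measure (EuclideanSpace ℝ (Fin d))).toSphere

/-- Projection of a point of ℝ^d onto the direction θ. -/
noncomputable def sphProj {d : ℕ} (θ : Metric.sphere (0 : EuclideanSpace ℝ (Fin d)) 1)
    (x : EuclideanSpace ℝ (Fin d)) : ℝ :=
  inner (𝕜 := ℝ) (θ : EuclideanSpace ℝ (Fin d)) x

/-- The p-th power of the sliced Wasserstein distance on ℝ^d. -/
noncomputable def SWpPow {d : ℕ} (p : ℝ) (μ ν : Measure (EuclideanSpace ℝ (Fin d))) : ℝ :=
  ∫ θ, WpPow p (μ.map (sphProj θ)) (ν.map (sphProj θ)) ∂(uniformSphere d)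

/-!
On `[0, R]` the map `t ↦ t ^ p` is `p R^(p-1)`-Lipschitz, so moving the endpoints of a segment of
length at most `R` by `u` and `v` changes its `p`-th power by at most `p R^(p-1) (‖u‖ + ‖v‖)`.
Gluing near-optimal couplings of `(α', β')`, `(α', α)` and `(β', β)` into one measure and
integrating this estimate gives
`W_p^p(α, β) ≤ W_p^p(α', β') + p R^(p-1) (W_1(α', α) + W_1(β', β))`
for measures supported on a set of diameter `R`. The projections of the four measures onto a
direction `θ` are supported on a set of diameter at most `R`, and integrating over `θ` gives the
sliced bound. This needs the integrands to be integrable over the sphere; they are Lipschitz in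
`θ` by the same estimate, since moving `θ` moves the projected measures by a `W_1`-distance of
order `dist θ θ'`.
-/

open ProbabilityTheory

lemma isProbabilityMeasure_of_map_eq {X Y : Type*} [MeasurableSpace X] [MeasurableSpace Y]
    {γ : Measure X} {f : X → Y} {μ : Measure Y} [IsProbabilityMeasure μ] (h : γ.map f = μ) :
    IsProbabilityMeasure γ :=
  have : IsProbabilityMeasure (γ.map f) := h ▸ ‹_›
  Measure.isProbabilityMeasure_of_map f

section Couplings

variable {E : Type*} [NormedAddCommGroup E] [MeasurableSpace E]

lemma integral_norm_sub_rpow_nonneg (p : ℝ) (γ : Measure (E × E)) :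
    0 ≤ ∫ z, ‖z.1 - z.2‖ ^ p ∂γ :=
  integral_nonneg fun _ => by positivity

lemma WpPow_le_integral {p : ℝ} {μ ν : Measure E} {γ : Measure (E × E)}
    (h₁ : γ.map Prod.fst = μ) (h₂ : γ.map Prod.snd = ν) :
    WpPow p μ ν ≤ ∫ z, ‖z.1 - z.2‖ ^ p ∂γ :=
  csInf_le ⟨0, by rintro _ ⟨γ, -, -, rfl⟩; exact integral_norm_sub_rpow_nonneg p γ⟩
    ⟨γ, h₁, h₂, rfl⟩

lemma exists_integral_lt_WpPow_add (p : ℝ) (μ ν : Measure E) [IsProbabilityMeasure μ]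
    [IsProbabilityMeasure ν] {ε : ℝ} (hε : 0 < ε) :
    ∃ γ : Measure (E × E), γ.map Prod.fst = μ ∧ γ.map Prod.snd = ν ∧
      ∫ z, ‖z.1 - z.2‖ ^ p ∂γ < WpPow p μ ν + ε := by
  by_contra! h
  have : WpPow p μ ν + ε ≤ WpPow p μ ν :=
    le_csInf ⟨_, μ.prod ν, Measure.fst_prod, Measure.snd_prod, rfl⟩ <| by
      rintro _ ⟨γ, h₁, h₂, rfl⟩
      exact h γ h₁ h₂
  linarith

lemma WpPow_comm (p : ℝ) (μ ν : Measure E) : WpPow p μ ν = WpPow p ν μ := by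
  have swap_mem : ∀ μ ν : Measure E, ∀ c, (∃ γ : Measure (E × E), γ.map Prod.fst = μ ∧
      γ.map Prod.snd = ν ∧ c = ∫ z, ‖z.1 - z.2‖ ^ p ∂γ) → ∃ γ : Measure (E × E),
      γ.map Prod.fst = ν ∧ γ.map Prod.snd = μ ∧ c = ∫ z, ‖z.1 - z.2‖ ^ p ∂γ := by
    rintro μ ν _ ⟨γ, h₁, h₂, rfl⟩
    refine ⟨γ.map Prod.swap, ?_, ?_, ?_⟩
    · rwa [Measure.map_map measurable_fst measurable_swap]
    · rwa [Measure.map_map measurable_snd measurable_swap]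
    · exact (integral_congr_ae (ae_of_all _ fun z => by rw [norm_sub_rev]; rfl)).trans
        (integral_map_equiv MeasurableEquiv.prodComm _).symm
  exact congrArg sInf (Set.ext fun c => ⟨swap_mem μ ν c, swap_mem ν μ c⟩)

end Couplings

section Gluing

variable {X Y X' Y' : Type*} [MeasurableSpace X] [MeasurableSpace Y] [MeasurableSpace X']
  [MeasurableSpace Y']

/-- `(x, y)` has law `γ` and, given `(x, y)`, the points `x'` and `y'` are drawn independently
from `κ₁ x` and `κ₂ y`. -/
noncomputable def glue (γ : Measure (X × Y)) (κ₁ : Kernel X X') (κ₂ : Kernel Y Y') :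
    Measure ((X × Y) × (X' × Y')) :=
  γ ⊗ₘ (κ₁.comap Prod.fst measurable_fst ×ₖ κ₂.comap Prod.snd measurable_snd)

variable (γ : Measure (X × Y)) [SFinite γ] (κ₁ : Kernel X X') [IsMarkovKernel κ₁]
  (κ₂ : Kernel Y Y') [IsMarkovKernel κ₂]

instance [IsProbabilityMeasure γ] : IsProbabilityMeasure (glue γ κ₁ κ₂) := by
  unfold glue; infer_instance

lemma glue_map_fst : (glue γ κ₁ κ₂).map Prod.fst = γ :=
  Measure.fst_compProd γ _

lemma glue_map_left : (glue γ κ₁ κ₂).map (fun w => (w.1.1, w.2.1)) = γ.fst ⊗ₘ κ₁ := by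
  ext s hs
  have hm : Measurable fun w : (X × Y) × (X' × Y') => (w.1.1, w.2.1) :=
    measurable_fst.fst.prodMk measurable_snd.fst
  rw [Measure.map_apply hm hs, glue, Measure.compProd_apply (hm hs), Measure.compProd_apply hs,
    Measure.fst, lintegral_map (Kernel.measurable_kernel_prodMk_left hs) measurable_fst]
  refine lintegral_congr fun z => ?_
  have : Prod.mk z ⁻¹' ((fun w : (X × Y) × (X' × Y') => (w.1.1, w.2.1)) ⁻¹' s)
      = (Prod.mk z.1 ⁻¹' s) ×ˢ univ := by
    ext; simp
  rw [this, Kernel.prod_apply, Measure.prod_prod, Kernel.comap_apply, Kernel.comap_apply,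
    measure_univ, mul_one]

lemma glue_map_right : (glue γ κ₁ κ₂).map (fun w => (w.1.2, w.2.2)) = γ.snd ⊗ₘ κ₂ := by
  ext s hs
  have hm : Measurable fun w : (X × Y) × (X' × Y') => (w.1.2, w.2.2) :=
    measurable_fst.snd.prodMk measurable_snd.snd
  rw [Measure.map_apply hm hs, glue, Measure.compProd_apply (hm hs), Measure.compProd_apply hs,
    Measure.snd, lintegral_map (Kernel.measurable_kernel_prodMk_left hs) measurable_snd]
  refine lintegral_congr fun z => ?_
  have : Prod.mk z ⁻¹' ((fun w : (X × Y) × (X' × Y') => (w.1.2, w.2.2)) ⁻¹' s)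
      = univ ×ˢ (Prod.mk z.2 ⁻¹' s) := by
    ext; simp
  rw [this, Kernel.prod_apply, Measure.prod_prod, Kernel.comap_apply, Kernel.comap_apply,
    measure_univ, one_mul]

lemma exists_glue [StandardBorelSpace X'] [Nonempty X'] [StandardBorelSpace Y'] [Nonempty Y']
    (γ : Measure (X × Y)) [IsProbabilityMeasure γ] (ρ₁ : Measure (X × X'))
    [IsFiniteMeasure ρ₁] (ρ₂ : Measure (Y × Y')) [IsFiniteMeasure ρ₂]
    (h₁ : ρ₁.map Prod.fst = γ.map Prod.fst) (h₂ : ρ₂.map Prod.fst = γ.map Prod.snd) :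
    ∃ Ω : Measure ((X × Y) × (X' × Y')), IsProbabilityMeasure Ω ∧ Ω.map Prod.fst = γ ∧
      Ω.map (fun w => (w.1.1, w.2.1)) = ρ₁ ∧ Ω.map (fun w => (w.1.2, w.2.2)) = ρ₂ := by
  refine ⟨glue γ ρ₁.condKernel ρ₂.condKernel, inferInstance, glue_map_fst _ _ _, ?_, ?_⟩
  · rw [glue_map_left, Measure.fst, ← h₁]
    exact ρ₁.disintegrate _
  · rw [glue_map_right, Measure.snd, ← h₂]
    exact ρ₂.disintegrate _

end Gluing

lemma abs_rpow_sub_rpow_le {p R a b : ℝ} (hp : 1 ≤ p) (ha : a ∈ Icc 0 R) (hb : b ∈ Icc 0 R) :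
    |a ^ p - b ^ p| ≤ p * R ^ (p - 1) * |a - b| := by
  refine Convex.norm_image_sub_le_of_norm_hasDerivWithin_le
    (fun x _ => (Real.hasDerivAt_rpow_const (Or.inr hp)).hasDerivWithinAt)
    (fun x hx => ?_) (convex_Icc 0 R) hb ha
  have hpow : x ^ (p - 1) ≤ R ^ (p - 1) := Real.rpow_le_rpow hx.1 hx.2 (by linarith)
  rw [Real.norm_eq_abs, abs_of_nonneg (by have := hx.1; positivity)]
  gcongr

lemma norm_sub_rpow_le_add {E : Type*} [SeminormedAddCommGroup E] {p R : ℝ} (hp : 1 ≤ p)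
    {x y x' y' : E} (hxy : ‖x - y‖ ≤ R) (hxy' : ‖x' - y'‖ ≤ R) :
    ‖x - y‖ ^ p ≤ ‖x' - y'‖ ^ p + p * R ^ (p - 1) * (‖x' - x‖ + ‖y' - y‖) := by
  have hR : 0 ≤ R := (norm_nonneg _).trans hxy
  have hdiff : |‖x - y‖ - ‖x' - y'‖| ≤ ‖x' - x‖ + ‖y' - y‖ :=
    calc |‖x - y‖ - ‖x' - y'‖| ≤ ‖(x - y) - (x' - y')‖ := abs_norm_sub_norm_le _ _
      _ = ‖(x' - x) - (y' - y)‖ := by rw [← norm_neg]; congr 1; abel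
      _ ≤ ‖x' - x‖ + ‖y' - y‖ := norm_sub_le _ _
  have := abs_rpow_sub_rpow_le hp ⟨norm_nonneg _, hxy⟩ ⟨norm_nonneg _, hxy'⟩
  have hc : 0 ≤ p * R ^ (p - 1) := by positivity
  nlinarith [abs_le.1 this, mul_le_mul_of_nonneg_left hdiff hc]

section Wasserstein

variable {E : Type*} [NormedAddCommGroup E] [SecondCountableTopology E] [MeasurableSpace E]
  [BorelSpace E]

lemma measurable_norm_sub_rpow (q : ℝ) : Measurable fun z : E × E => ‖z.1 - z.2‖ ^ q :=
  (measurable_fst.sub measurable_snd).norm.pow_const q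

lemma integrable_norm_sub_rpow_of_ae_mem {Ω : Type*} [MeasurableSpace Ω] {P : Measure Ω}
    [IsFiniteMeasure P] {q R : ℝ} (hq : 0 ≤ q) {K : Set E} (hK : ∀ x ∈ K, ∀ y ∈ K, ‖x - y‖ ≤ R)
    {f g : Ω → E} (hf : Measurable f) (hg : Measurable g) (hfg : ∀ᵐ ω ∂P, f ω ∈ K ∧ g ω ∈ K) :
    Integrable (fun ω => ‖f ω - g ω‖ ^ q) P := by
  refine Integrable.of_bound ((hf.sub hg).norm.pow_const q).aestronglyMeasurable (R ^ q) <|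
    hfg.mono fun ω ⟨hfω, hgω⟩ => ?_
  rw [Real.norm_of_nonneg (by positivity)]
  exact Real.rpow_le_rpow (norm_nonneg _) (hK _ hfω _ hgω) hq

lemma integral_norm_sub_rpow_le_add {Ω : Type*} [MeasurableSpace Ω] {P : Measure Ω}
    [IsFiniteMeasure P] {p R : ℝ} (hp : 1 ≤ p) {K : Set E} (hK : ∀ x ∈ K, ∀ y ∈ K, ‖x - y‖ ≤ R)
    {f g f' g' : Ω → E} (hf : Measurable f) (hg : Measurable g) (hf' : Measurable f')
    (hg' : Measurable g') (hmem : ∀ᵐ ω ∂P, f ω ∈ K ∧ g ω ∈ K ∧ f' ω ∈ K ∧ g' ω ∈ K) :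
    ∫ ω, ‖f ω - g ω‖ ^ p ∂P ≤ ∫ ω, ‖f' ω - g' ω‖ ^ p ∂P +
      p * R ^ (p - 1) * (∫ ω, ‖f' ω - f ω‖ ^ (1 : ℝ) ∂P + ∫ ω, ‖g' ω - g ω‖ ^ (1 : ℝ) ∂P) := by
  have hp0 : 0 ≤ p := by linarith
  have i₀ := integrable_norm_sub_rpow_of_ae_mem hp0 hK hf' hg' <|
    hmem.mono fun _ h => ⟨h.2.2.1, h.2.2.2⟩
  have i₁ := integrable_norm_sub_rpow_of_ae_mem zero_le_one hK hf' hf <|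
    hmem.mono fun _ h => ⟨h.2.2.1, h.1⟩
  have i₂ := integrable_norm_sub_rpow_of_ae_mem zero_le_one hK hg' hg <|
    hmem.mono fun _ h => ⟨h.2.2.2, h.2.1⟩
  calc ∫ ω, ‖f ω - g ω‖ ^ p ∂P
      ≤ ∫ ω, ‖f' ω - g' ω‖ ^ p +
          p * R ^ (p - 1) * (‖f' ω - f ω‖ ^ (1 : ℝ) + ‖g' ω - g ω‖ ^ (1 : ℝ)) ∂P := by
        refine integral_mono_ae (integrable_norm_sub_rpow_of_ae_mem hp0 hK hf hg <|
          hmem.mono fun _ h => ⟨h.1, h.2.1⟩)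
          (i₀.add ((i₁.add i₂).const_mul _)) <| hmem.mono fun ω ⟨hfω, hgω, hf'ω, hg'ω⟩ => ?_
        simpa only [Real.rpow_one] using
          norm_sub_rpow_le_add hp (hK _ hfω _ hgω) (hK _ hf'ω _ hg'ω)
    _ = _ := by
        rw [integral_add i₀ ?_, integral_const_mul, integral_add i₁ i₂]
        exact (i₁.add i₂).const_mul _

lemma WpPow_map_le_integral {X : Type*} [MeasurableSpace X] (p : ℝ) (μ : Measure X)
    {f g : X → E} (hf : Measurable f) (hg : Measurable g) :
    WpPow p (μ.map f) (μ.map g) ≤ ∫ x, ‖f x - g x‖ ^ p ∂μ := by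
  refine (WpPow_le_integral (γ := μ.map fun x => (f x, g x)) ?_ ?_).trans_eq
    (integral_map (by fun_prop) (measurable_norm_sub_rpow p).aestronglyMeasurable)
  · rw [Measure.map_map measurable_fst (by fun_prop)]; rfl
  · rw [Measure.map_map measurable_snd (by fun_prop)]; rfl

lemma WpPow_le_integral_add_integral [CompleteSpace E] {p R : ℝ} (hp : 1 ≤ p) {K : Set E}
    (hK : ∀ x ∈ K, ∀ y ∈ K, ‖x - y‖ ≤ R) {α β α' β' : Measure E}
    [IsProbabilityMeasure α'] [IsProbabilityMeasure β']
    (hα : ∀ᵐ x ∂α, x ∈ K) (hβ : ∀ᵐ x ∂β, x ∈ K) (hα' : ∀ᵐ x ∂α', x ∈ K)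
    (hβ' : ∀ᵐ x ∂β', x ∈ K) {γ' γ₁ γ₂ : Measure (E × E)}
    (hγ'₁ : γ'.map Prod.fst = α') (hγ'₂ : γ'.map Prod.snd = β')
    (hγ₁₁ : γ₁.map Prod.fst = α') (hγ₁₂ : γ₁.map Prod.snd = α)
    (hγ₂₁ : γ₂.map Prod.fst = β') (hγ₂₂ : γ₂.map Prod.snd = β) :
    WpPow p α β ≤ ∫ z, ‖z.1 - z.2‖ ^ p ∂γ' +
      p * R ^ (p - 1) * (∫ z, ‖z.1 - z.2‖ ^ (1 : ℝ) ∂γ₁ + ∫ z, ‖z.1 - z.2‖ ^ (1 : ℝ) ∂γ₂) := by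
  have := isProbabilityMeasure_of_map_eq hγ'₁
  have := isProbabilityMeasure_of_map_eq hγ₁₁
  have := isProbabilityMeasure_of_map_eq hγ₂₁
  obtain ⟨Ω, _, hΩ, hΩ₁, hΩ₂⟩ :=
    exists_glue γ' γ₁ γ₂ (hγ₁₁.trans hγ'₁.symm) (hγ₂₁.trans hγ'₂.symm)
  have hx : Ω.map (fun w => w.2.1) = α := by
    rw [← hγ₁₂, ← hΩ₁, Measure.map_map measurable_snd (by fun_prop)]; rfl
  have hy : Ω.map (fun w => w.2.2) = β := by
    rw [← hγ₂₂, ← hΩ₂, Measure.map_map measurable_snd (by fun_prop)]; rfl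
  have hx' : Ω.map (fun w => w.1.1) = α' := by
    rw [← hγ'₁, ← hΩ, Measure.map_map measurable_fst measurable_fst]; rfl
  have hy' : Ω.map (fun w => w.1.2) = β' := by
    rw [← hγ'₂, ← hΩ, Measure.map_map measurable_snd measurable_fst]; rfl
  have hmem : ∀ᵐ w ∂Ω, w.2.1 ∈ K ∧ w.2.2 ∈ K ∧ w.1.1 ∈ K ∧ w.1.2 ∈ K := by
    filter_upwards [ae_of_ae_map (by fun_prop) (hx ▸ hα), ae_of_ae_map (by fun_prop) (hy ▸ hβ),
      ae_of_ae_map (by fun_prop) (hx' ▸ hα'), ae_of_ae_map (by fun_prop) (hy' ▸ hβ')]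
      with w h₁ h₂ h₃ h₄ using ⟨h₁, h₂, h₃, h₄⟩
  calc WpPow p α β ≤ ∫ w, ‖w.2.1 - w.2.2‖ ^ p ∂Ω :=
        hx ▸ hy ▸ WpPow_map_le_integral p Ω (by fun_prop) (by fun_prop)
    _ ≤ _ := integral_norm_sub_rpow_le_add hp hK (by fun_prop) (by fun_prop) (by fun_prop)
        (by fun_prop) hmem
    _ = _ := by
        rw [← hΩ, ← hΩ₁, ← hΩ₂, integral_map (by fun_prop)
          (measurable_norm_sub_rpow p).aestronglyMeasurable, integral_map (by fun_prop)
          (measurable_norm_sub_rpow 1).aestronglyMeasurable, integral_map (by fun_prop)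
          (measurable_norm_sub_rpow 1).aestronglyMeasurable]

theorem WpPow_le_WpPow_add [CompleteSpace E] {p R : ℝ} (hp : 1 ≤ p) {K : Set E}
    (hK : ∀ x ∈ K, ∀ y ∈ K, ‖x - y‖ ≤ R) {α β α' β' : Measure E} [IsProbabilityMeasure α]
    [IsProbabilityMeasure β] [IsProbabilityMeasure α'] [IsProbabilityMeasure β']
    (hα : ∀ᵐ x ∂α, x ∈ K) (hβ : ∀ᵐ x ∂β, x ∈ K) (hα' : ∀ᵐ x ∂α', x ∈ K)
    (hβ' : ∀ᵐ x ∂β', x ∈ K) :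
    WpPow p α β ≤ WpPow p α' β' + p * R ^ (p - 1) * (WpPow 1 α' α + WpPow 1 β' β) := by
  obtain ⟨x, hx⟩ := hα.exists
  have hR : 0 ≤ R := by simpa using hK x hx x hx
  have hc : 0 ≤ p * R ^ (p - 1) := mul_nonneg (by linarith) (by positivity)
  refine le_of_forall_pos_lt_add fun ε hε => ?_
  obtain ⟨δ, hδ, hδε⟩ : ∃ δ > 0, δ * (1 + 2 * (p * R ^ (p - 1))) = ε :=
    ⟨ε / (1 + 2 * (p * R ^ (p - 1))), by positivity, div_mul_cancel₀ _ (by positivity)⟩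
  obtain ⟨γ', h'₁, h'₂, h'⟩ := exists_integral_lt_WpPow_add p α' β' hδ
  obtain ⟨γ₁, h₁₁, h₁₂, h₁⟩ := exists_integral_lt_WpPow_add 1 α' α hδ
  obtain ⟨γ₂, h₂₁, h₂₂, h₂⟩ := exists_integral_lt_WpPow_add 1 β' β hδ
  have := WpPow_le_integral_add_integral hp hK hα hβ hα' hβ' h'₁ h'₂ h₁₁ h₁₂ h₂₁ h₂₂
  linarith [mul_le_mul_of_nonneg_left h₁.le hc, mul_le_mul_of_nonneg_left h₂.le hc]

theorem abs_WpPow_sub_WpPow_le [CompleteSpace E] {p R : ℝ} (hp : 1 ≤ p) {K : Set E}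
    (hK : ∀ x ∈ K, ∀ y ∈ K, ‖x - y‖ ≤ R) {α β α' β' : Measure E} [IsProbabilityMeasure α]
    [IsProbabilityMeasure β] [IsProbabilityMeasure α'] [IsProbabilityMeasure β']
    (hα : ∀ᵐ x ∂α, x ∈ K) (hβ : ∀ᵐ x ∂β, x ∈ K) (hα' : ∀ᵐ x ∂α', x ∈ K)
    (hβ' : ∀ᵐ x ∂β', x ∈ K) :
    |WpPow p α β - WpPow p α' β'| ≤ p * R ^ (p - 1) * (WpPow 1 α α' + WpPow 1 β β') := by
  have h₁ := WpPow_le_WpPow_add hp hK hα hβ hα' hβ'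
  have h₂ := WpPow_le_WpPow_add hp hK hα' hβ' hα hβ
  rw [WpPow_comm 1 α', WpPow_comm 1 β'] at h₁
  exact abs_sub_le_iff.2 ⟨by linarith, by linarith⟩

end Wasserstein

section Sliced

variable {d : ℕ}

instance : IsFiniteMeasure (uniformSphere d) :=
  ⟨by simpa [uniformSphere] using (ENNReal.inv_mul_le_one _).trans_lt ENNReal.one_lt_top⟩

lemma abs_sphProj_le (θ : Metric.sphere (0 : EuclideanSpace ℝ (Fin d)) 1)
    (x : EuclideanSpace ℝ (Fin d)) : |sphProj θ x| ≤ ‖x‖ := by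
  simpa [sphProj, norm_eq_of_mem_sphere] using
    abs_real_inner_le_norm (θ : EuclideanSpace ℝ (Fin d)) x

lemma abs_sphProj_sub_sphProj_le (θ θ' : Metric.sphere (0 : EuclideanSpace ℝ (Fin d)) 1)
    (x : EuclideanSpace ℝ (Fin d)) : |sphProj θ x - sphProj θ' x| ≤ dist θ θ' * ‖x‖ := by
  rw [sphProj, sphProj, ← inner_sub_left, Subtype.dist_eq, dist_eq_norm]
  exact abs_real_inner_le_norm _ _

lemma lipschitzWith_sphProj (θ : Metric.sphere (0 : EuclideanSpace ℝ (Fin d)) 1) :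
    LipschitzWith 1 (sphProj θ) :=
  LipschitzWith.of_dist_le_mul fun x y => by
    rw [Real.dist_eq, dist_eq_norm, NNReal.coe_one, one_mul, sphProj, sphProj,
      ← inner_sub_right]
    exact abs_sphProj_le θ (x - y)

instance (θ : Metric.sphere (0 : EuclideanSpace ℝ (Fin d)) 1)
    (μ : Measure (EuclideanSpace ℝ (Fin d))) [IsProbabilityMeasure μ] :
    IsProbabilityMeasure (μ.map (sphProj θ)) :=
  Measure.isProbabilityMeasure_map (lipschitzWith_sphProj θ).continuous.aemeasurable

lemma WpPow_one_map_sphProj_le {μ : Measure (EuclideanSpace ℝ (Fin d))} [IsProbabilityMeasure μ]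
    {M : ℝ} (hμ : ∀ᵐ x ∂μ, ‖x‖ ≤ M) (θ θ' : Metric.sphere (0 : EuclideanSpace ℝ (Fin d)) 1) :
    WpPow 1 (μ.map (sphProj θ)) (μ.map (sphProj θ')) ≤ dist θ θ' * M := by
  have hbound : ∀ᵐ x ∂μ, ‖‖sphProj θ x - sphProj θ' x‖ ^ (1 : ℝ)‖ ≤ dist θ θ' * M :=
    hμ.mono fun x hx => by
      rw [Real.rpow_one, norm_norm, Real.norm_eq_abs]
      exact (abs_sphProj_sub_sphProj_le θ θ' x).trans (mul_le_mul_of_nonneg_left hx dist_nonneg)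
  calc WpPow 1 (μ.map (sphProj θ)) (μ.map (sphProj θ'))
      ≤ ∫ x, ‖sphProj θ x - sphProj θ' x‖ ^ (1 : ℝ) ∂μ :=
        WpPow_map_le_integral 1 μ (lipschitzWith_sphProj θ).continuous.measurable
          (lipschitzWith_sphProj θ').continuous.measurable
    _ ≤ ‖∫ x, ‖sphProj θ x - sphProj θ' x‖ ^ (1 : ℝ) ∂μ‖ := Real.le_norm_self _
    _ ≤ dist θ θ' * M := by simpa using norm_integral_le_of_norm_le_const hbound

lemma ae_map_sphProj_mem_closedBall {μ : Measure (EuclideanSpace ℝ (Fin d))} {M : ℝ}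
    (hμ : ∀ᵐ x ∂μ, ‖x‖ ≤ M) (θ : Metric.sphere (0 : EuclideanSpace ℝ (Fin d)) 1) :
    ∀ᵐ y ∂μ.map (sphProj θ), y ∈ Metric.closedBall 0 M :=
  (ae_map_iff (lipschitzWith_sphProj θ).continuous.aemeasurable measurableSet_closedBall).2 <|
    hμ.mono fun x hx => mem_closedBall_zero_iff.2 ((abs_sphProj_le θ x).trans hx)

lemma continuous_WpPow_map_sphProj {p M : ℝ} (hp : 1 ≤ p)
    {μ ν : Measure (EuclideanSpace ℝ (Fin d))} [IsProbabilityMeasure μ] [IsProbabilityMeasure ν]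
    (hμ : ∀ᵐ x ∂μ, ‖x‖ ≤ M) (hν : ∀ᵐ x ∂ν, ‖x‖ ≤ M) :
    Continuous fun θ : Metric.sphere (0 : EuclideanSpace ℝ (Fin d)) 1 =>
      WpPow p (μ.map (sphProj θ)) (ν.map (sphProj θ)) := by
  obtain ⟨x₀, hx₀⟩ := hμ.exists
  have hM : 0 ≤ M := (norm_nonneg x₀).trans hx₀
  have hK : ∀ x ∈ Metric.closedBall (0 : ℝ) M, ∀ y ∈ Metric.closedBall (0 : ℝ) M,
      ‖x - y‖ ≤ M + M := fun x hx y hy =>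
    (norm_sub_le x y).trans <|
      add_le_add (mem_closedBall_zero_iff.1 hx) (mem_closedBall_zero_iff.1 hy)
  set L := p * (M + M) ^ (p - 1) * (M + M)
  refine (LipschitzWith.of_dist_le_mul (K := L.toNNReal) fun θ θ' => ?_).continuous
  have hμθ := WpPow_one_map_sphProj_le hμ θ θ'
  have hνθ := WpPow_one_map_sphProj_le hν θ θ'
  rw [Real.dist_eq, Real.coe_toNNReal _ (by positivity)]
  calc _ ≤ p * (M + M) ^ (p - 1) * (WpPow 1 (μ.map (sphProj θ)) (μ.map (sphProj θ')) +
          WpPow 1 (ν.map (sphProj θ)) (ν.map (sphProj θ'))) :=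
        abs_WpPow_sub_WpPow_le hp hK (ae_map_sphProj_mem_closedBall hμ θ)
          (ae_map_sphProj_mem_closedBall hν θ) (ae_map_sphProj_mem_closedBall hμ θ')
          (ae_map_sphProj_mem_closedBall hν θ')
    _ ≤ p * (M + M) ^ (p - 1) * (dist θ θ' * M + dist θ θ' * M) := by gcongr
    _ = L * dist θ θ' := by ring

lemma integrable_WpPow_map_sphProj {p M : ℝ} (hp : 1 ≤ p)
    {μ ν : Measure (EuclideanSpace ℝ (Fin d))} [IsProbabilityMeasure μ] [IsProbabilityMeasure ν]
    (hμ : ∀ᵐ x ∂μ, ‖x‖ ≤ M) (hν : ∀ᵐ x ∂ν, ‖x‖ ≤ M) :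
    Integrable (fun θ => WpPow p (μ.map (sphProj θ)) (ν.map (sphProj θ))) (uniformSphere d) :=
  (continuous_WpPow_map_sphProj hp hμ hν).integrable_of_hasCompactSupport
    (HasCompactSupport.of_compactSpace _)

lemma abs_WpPow_map_sphProj_sub_le {p R : ℝ} (hp : 1 ≤ p) {s : Set (EuclideanSpace ℝ (Fin d))}
    (hs : IsCompact s) (hsR : Metric.diam s ≤ R) {μ ν μ' ν' : Measure (EuclideanSpace ℝ (Fin d))}
    [IsProbabilityMeasure μ] [IsProbabilityMeasure ν] [IsProbabilityMeasure μ']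
    [IsProbabilityMeasure ν'] (hμ : ∀ᵐ x ∂μ, x ∈ s) (hν : ∀ᵐ x ∂ν, x ∈ s)
    (hμ' : ∀ᵐ x ∂μ', x ∈ s) (hν' : ∀ᵐ x ∂ν', x ∈ s)
    (θ : Metric.sphere (0 : EuclideanSpace ℝ (Fin d)) 1) :
    |WpPow p (μ.map (sphProj θ)) (ν.map (sphProj θ)) -
        WpPow p (μ'.map (sphProj θ)) (ν'.map (sphProj θ))| ≤
      p * R ^ (p - 1) * (WpPow 1 (μ.map (sphProj θ)) (μ'.map (sphProj θ)) +
        WpPow 1 (ν.map (sphProj θ)) (ν'.map (sphProj θ))) := by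
  have hK : ∀ y ∈ sphProj θ '' s, ∀ y' ∈ sphProj θ '' s, ‖y - y'‖ ≤ R := by
    rintro _ ⟨x, hx, rfl⟩ _ ⟨x', hx', rfl⟩
    rw [← dist_eq_norm]
    exact ((lipschitzWith_sphProj θ).dist_le_mul x x').trans <| by
      simpa using (Metric.dist_le_diam_of_mem hs.isBounded hx hx').trans hsR
  have hmem : ∀ {ρ : Measure (EuclideanSpace ℝ (Fin d))}, (∀ᵐ x ∂ρ, x ∈ s) →
      ∀ᵐ y ∂ρ.map (sphProj θ), y ∈ sphProj θ '' s := fun hρ =>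
    (ae_map_iff (lipschitzWith_sphProj θ).continuous.aemeasurable
      (hs.image (lipschitzWith_sphProj θ).continuous).measurableSet).2 <|
      hρ.mono fun _ hx => mem_image_of_mem _ hx
  exact abs_WpPow_sub_WpPow_le hp hK (hmem hμ) (hmem hν) (hmem hμ') (hmem hν')

end Sliced

theorem swpPow_diff_le_sw1_general (d : ℕ) (p R : ℝ) (hp : 1 ≤ p) (hR : 0 < R) :
    ∃ C : ℝ, 0 < C ∧
      ∀ (s : Set (EuclideanSpace ℝ (Fin d))), IsCompact s → Metric.diam s ≤ R →
      ∀ (G₁ G₂ G Ghat : Measure (EuclideanSpace ℝ (Fin d))),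
        IsProbabilityMeasure G₁ → IsProbabilityMeasure G₂ →
        IsProbabilityMeasure G → IsProbabilityMeasure Ghat →
        G₁ s = 1 → G₂ s = 1 → G s = 1 → Ghat s = 1 →
        |SWpPow p G₁ G - SWpPow p G₂ Ghat| ≤ C * (SWpPow 1 G₁ G₂ + SWpPow 1 G Ghat) := by
  refine ⟨p * R ^ (p - 1), mul_pos (by linarith) (by positivity), ?_⟩
  intro s hs hsR G₁ G₂ G Ghat _ _ _ _ h₁ h₂ h₃ h₄
  have hae : ∀ {μ : Measure (EuclideanSpace ℝ (Fin d))} [IsProbabilityMeasure μ], μ s = 1 →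
      ∀ᵐ x ∂μ, x ∈ s := fun h => (mem_ae_iff_prob_eq_one hs.measurableSet).2 h
  obtain ⟨M, hM⟩ := hs.isBounded.exists_norm_le
  have hint := fun {q : ℝ} (hq : 1 ≤ q) {μ ν : Measure (EuclideanSpace ℝ (Fin d))}
    [IsProbabilityMeasure μ] [IsProbabilityMeasure ν] (hμ : μ s = 1) (hν : ν s = 1) =>
    integrable_WpPow_map_sphProj hq ((hae hμ).mono hM) ((hae hν).mono hM)
  rw [SWpPow, SWpPow, SWpPow, SWpPow, ← integral_sub (hint hp h₁ h₃) (hint hp h₂ h₄),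
    ← integral_add (hint le_rfl h₁ h₂) (hint le_rfl h₃ h₄), ← integral_const_mul]
  refine abs_integral_le_integral_abs.trans <| integral_mono
    ((hint hp h₁ h₃).sub (hint hp h₂ h₄)).abs
    (((hint le_rfl h₁ h₂).add (hint le_rfl h₃ h₄)).const_mul _) fun θ => ?_
  exact abs_WpPow_map_sphProj_sub_le hp hs hsR (hae h₁) (hae h₃) (hae h₂) (hae h₄) θ

/-- On a compact set of diameter `R`, the p-th power sliced Wasserstein distance is
jointly Lipschitz-comparable with the sliced 1-Wasserstein distance, with a constant
depending only on `p` and `R`. -/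
theorem swpPow_diff_le_sw1 (d : ℕ) (hd : 2 ≤ d) (p R : ℝ) (hp : 1 ≤ p) (hR : 0 < R) :
    ∃ C : ℝ, 0 < C ∧
      ∀ (s : Set (EuclideanSpace ℝ (Fin d))), IsCompact s → Metric.diam s ≤ R →
      ∀ (G₁ G₂ G Ghat : Measure (EuclideanSpace ℝ (Fin d))),
        IsProbabilityMeasure G₁ → IsProbabilityMeasure G₂ →
        IsProbabilityMeasure G → IsProbabilityMeasure Ghat →
        G₁ s = 1 → G₂ s = 1 → G s = 1 → Ghat s = 1 →
        |SWpPow p G₁ G - SWpPow p G₂ Ghat| ≤ C * (SWpPow 1 G₁ G₂ + SWpPow 1 G Ghat) :=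
  swpPow_diff_le_sw1_general d p R hp hR
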